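/- For every nonzero ε ∈ ℂ, the H-orbit of v_ε is dense in Z: the closure (with respect to the natural topology of M₂(ℂ) × M₂(ℂ) ≅ ℂ⁸) of the set { h · v_ε : h ∈ H } equals Z. -/

import Mathlib

open Matrix

/-- The matrix `J = !![0,-1; 1,0]`. -/
def MJ : Matrix (Fin 2) (Fin 2) ℂ := !![0, -1; 1, 0]

/-- The matrix `T = !![0,1; 1,0]`. -/
def MT : Matrix (Fin 2) (Fin 2) ℂ := !![0, 1; 1, 0]

/-- The variety `Z` of pairs of 2×2 matrices. -/
def Z : Set (Matrix (Fin 2) (Fin 2) ℂ × Matrix (Fin 2) (Fin 2) ℂ) :=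
  {p | p.1.det = 0 ∧ p.2.det = 0 ∧ p.1 * MJ * p.2ᵀ = 0 ∧ p.2ᵀ * MT * p.1 = 0}

/-- For `g = !![a,b; c,d]` with determinant `Δ`, `g* = Δ⁻¹ • !![a,-b; -c,d]`. -/
noncomputable def gstar (g : Matrix (Fin 2) (Fin 2) ℂ) : Matrix (Fin 2) (Fin 2) ℂ :=
  (g.det)⁻¹ • !![g 0 0, -(g 0 1); -(g 1 0), g 1 1]

/-- The group `H = SL₂(ℂ) × GL₂(ℂ) × ℂˣ`. -/
abbrev H := Matrix.SpecialLinearGroup (Fin 2) ℂ × GL (Fin 2) ℂ × ℂˣ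

/-- The action `(h₁,h₂,z)·(B₁,B₂) = (z · h₂* · B₁ · h₁⁻¹, h₂ · B₂ · h₁⁻¹)`. -/
noncomputable def act (h : H) (v : Matrix (Fin 2) (Fin 2) ℂ × Matrix (Fin 2) (Fin 2) ℂ) :
    Matrix (Fin 2) (Fin 2) ℂ × Matrix (Fin 2) (Fin 2) ℂ :=
  ((h.2.2 : ℂ) • (gstar (h.2.1 : Matrix (Fin 2) (Fin 2) ℂ) * v.1 *
      ((h.1⁻¹ : Matrix.SpecialLinearGroup (Fin 2) ℂ) : Matrix (Fin 2) (Fin 2) ℂ)),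
    (h.2.1 : Matrix (Fin 2) (Fin 2) ℂ) * v.2 *
      ((h.1⁻¹ : Matrix.SpecialLinearGroup (Fin 2) ℂ) : Matrix (Fin 2) (Fin 2) ℂ))

/-- The element `v_ε = ( !![0,ε; 0,0], !![0,ε; 0,0] )`. -/
def veps (ε : ℂ) : Matrix (Fin 2) (Fin 2) ℂ × Matrix (Fin 2) (Fin 2) ℂ :=
  (!![0, ε; 0, 0], !![0, ε; 0, 0])

/-!
Write `σ(w) = (w₀, -w₁)`. A direct computation shows that the orbit of `v_ε` consists exactly of
the pairs `zParam (t, w, r) = (t • σ(w) rᵀ, w rᵀ)` with `t, w, r` all nonzero. Conversely, the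
equations of `Z` force a point with `B₂ = w rᵀ ≠ 0` to have `B₁ = t • σ(w) rᵀ`, while a point
with `B₂ = 0` is a rank-one `(u rᵀ, 0)`, the swap of `zParam (0, u, r)`. Since swapping the two
components of `zParam (s, u, r)` with `s ≠ 0` gives `zParam (s⁻¹, s • σ(u), r)`, both `zParam` and
`swap ∘ zParam` map the dense set of nonzero parameters into the orbit, and their ranges cover
the closed set `Z`.
-/

lemma vecMulVec_mul_mul_vecMulVec {R l m n o : Type*} [CommSemiring R] [Fintype m] [Fintype n]
    (a : l → R) (b : m → R) (M : Matrix m n R) (c : n → R) (d : o → R) :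
    vecMulVec a b * M * vecMulVec c d = (b ᵥ* M ⬝ᵥ c) • vecMulVec a d := by
  rw [vecMulVec_mul, vecMulVec_mul_vecMulVec, vecMulVec_smul]

section TwoByTwo

variable {K : Type*} [Field K]

lemma exists_eq_smul_of_mul_eq_mul {v r : Fin 2 → K} (hr : r ≠ 0) (h : v 0 * r 1 = v 1 * r 0) :
    ∃ c : K, v = c • r := by
  obtain ⟨i, hi⟩ := Function.ne_iff.mp hr
  refine ⟨v i / r i, funext fun j => ?_⟩
  rw [Pi.smul_apply, smul_eq_mul, div_mul_eq_mul_div, eq_div_iff hi]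
  fin_cases i <;> fin_cases j <;> simp <;> grind

lemma exists_eq_vecMulVec_of_det_eq_zero {A : Matrix (Fin 2) (Fin 2) K} (h : A.det = 0) :
    ∃ u v : Fin 2 → K, A = vecMulVec u v := by
  by_cases h0 : A 0 = 0
  · refine ⟨![0, 1], A 1, ?_⟩
    ext i j
    fin_cases i <;> simp [vecMulVec_apply, congrFun h0]
  · obtain ⟨c, hc⟩ := exists_eq_smul_of_mul_eq_mul h0 (v := A 1) (by
      rw [det_fin_two] at h; linear_combination -h)
    refine ⟨![1, c], A 0, ?_⟩
    ext i j
    fin_cases i <;> simp [vecMulVec_apply, hc]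

lemma exists_SL2_row_one {v : Fin 2 → K} (hv : v ≠ 0) :
    ∃ M : SpecialLinearGroup (Fin 2) K, (M : Matrix (Fin 2) (Fin 2) K) 1 = v := by
  by_cases h1 : v 1 = 0
  · have h0 : v 0 ≠ 0 := fun h0 => hv (funext fun i => by fin_cases i <;> assumption)
    refine ⟨⟨!![0, -(v 0)⁻¹; v 0, v 1], by simp [det_fin_two, h0]⟩, ?_⟩
    funext j; fin_cases j <;> rfl
  · refine ⟨⟨!![(v 1)⁻¹, 0; v 0, v 1], by simp [det_fin_two, h1]⟩, ?_⟩
    funext j; fin_cases j <;> rfl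

lemma exists_SL2_col_zero {w : Fin 2 → K} (hw : w ≠ 0) :
    ∃ M : SpecialLinearGroup (Fin 2) K, ∀ i, (M : Matrix (Fin 2) (Fin 2) K) i 0 = w i := by
  by_cases h0 : w 0 = 0
  · have h1 : w 1 ≠ 0 := fun h1 => hw (funext fun i => by fin_cases i <;> assumption)
    refine ⟨⟨!![w 0, -(w 1)⁻¹; w 1, 0], by simp [det_fin_two, h1]⟩, fun i => ?_⟩
    fin_cases i <;> rfl
  · refine ⟨⟨!![w 0, 0; w 1, (w 0)⁻¹], by simp [det_fin_two, h0]⟩, fun i => ?_⟩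
    fin_cases i <;> rfl

end TwoByTwo

def negSnd (w : Fin 2 → ℂ) : Fin 2 → ℂ := ![w 0, -w 1]

lemma negSnd_ne_zero {w : Fin 2 → ℂ} (hw : w ≠ 0) : negSnd w ≠ 0 := by
  intro h
  exact hw (funext fun i => by have hi := congrFun h i; fin_cases i <;> simpa [negSnd] using hi)

lemma negSnd_smul_negSnd (c : ℂ) (w : Fin 2 → ℂ) : negSnd (c • negSnd w) = c • w := by
  funext i; fin_cases i <;> simp [negSnd]

def zParam (q : ℂ × (Fin 2 → ℂ) × (Fin 2 → ℂ)) :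
    Matrix (Fin 2) (Fin 2) ℂ × Matrix (Fin 2) (Fin 2) ℂ :=
  (q.1 • vecMulVec (negSnd q.2.1) q.2.2, vecMulVec q.2.1 q.2.2)

lemma continuous_zParam : Continuous zParam := by
  unfold zParam negSnd
  fun_prop

lemma swap_zParam {s : ℂ} (hs : s ≠ 0) (u r : Fin 2 → ℂ) :
    (zParam (s, u, r)).swap = zParam (s⁻¹, s • negSnd u, r) := by
  simp [zParam, negSnd_smul_negSnd, smul_smul, hs]

lemma zParam_mem_Z (q : ℂ × (Fin 2 → ℂ) × (Fin 2 → ℂ)) : zParam q ∈ Z := by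
  obtain ⟨t, w, r⟩ := q
  refine ⟨by simp [zParam, det_vecMulVec], det_vecMulVec .., ?_, ?_⟩ <;> dsimp only [zParam]
  · rw [transpose_vecMulVec, smul_mul_assoc, smul_mul_assoc, vecMulVec_mul_mul_vecMulVec]
    simp [MJ, vecMul, dotProduct, Fin.sum_univ_two, mul_comm]
  · rw [transpose_vecMulVec, mul_smul_comm, vecMulVec_mul_mul_vecMulVec]
    simp [MT, negSnd, vecMul, dotProduct, Fin.sum_univ_two, mul_comm]

lemma isClosed_Z : IsClosed Z := by
  refine (isClosed_eq ?_ ?_).inter ((isClosed_eq ?_ ?_).inter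
    ((isClosed_eq ?_ ?_).inter (isClosed_eq ?_ ?_))) <;> fun_prop

lemma act_veps (ε : ℂ) (h : H) :
    act h (veps ε) =
      zParam ((h.2.2 : ℂ) / (h.2.1 : Matrix (Fin 2) (Fin 2) ℂ).det,
        fun i => (h.2.1 : Matrix (Fin 2) (Fin 2) ℂ) i 0,
        ε • ((h.1⁻¹ : SpecialLinearGroup (Fin 2) ℂ) : Matrix (Fin 2) (Fin 2) ℂ) 1) := by
  obtain ⟨h₁, h₂, z⟩ := h
  refine Prod.ext ?_ ?_ <;> ext i j <;> fin_cases i <;> fin_cases j <;>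
    simp [act, veps, zParam, gstar, negSnd, vecMulVec_apply, mul_apply, vecMul, dotProduct,
      Fin.sum_univ_two, -cons_vecMulVec] <;> ring

lemma zParam_mem_orbit {ε t : ℂ} (hε : ε ≠ 0) (ht : t ≠ 0) {w r : Fin 2 → ℂ} (hw : w ≠ 0)
    (hr : r ≠ 0) : ∃ h : H, act h (veps ε) = zParam (t, w, r) := by
  obtain ⟨M, hM⟩ := exists_SL2_row_one (smul_ne_zero (inv_ne_zero hε) hr)
  obtain ⟨g, hg⟩ := exists_SL2_col_zero hw
  have hdet : ((g : GL (Fin 2) ℂ) : Matrix (Fin 2) (Fin 2) ℂ).det = 1 := g.2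
  refine ⟨(M⁻¹, g, Units.mk0 t ht), ?_⟩
  rw [act_veps, inv_inv, hM, smul_smul, mul_inv_cancel₀ hε, one_smul, hdet, div_one]
  exact congrArg zParam (Prod.ext rfl (Prod.ext (funext hg) rfl))

lemma exists_eq_smul_vecMulVec_negSnd_of_mem_Z {B : Matrix (Fin 2) (Fin 2) ℂ}
    {w r : Fin 2 → ℂ} (hw : w ≠ 0) (hr : r ≠ 0) (hZ : (B, vecMulVec w r) ∈ Z) :
    ∃ t : ℂ, B = t • vecMulVec (negSnd w) r := by
  obtain ⟨hdet, -, hJ, hT⟩ := hZ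
  obtain ⟨u, s, rfl⟩ := exists_eq_vecMulVec_of_det_eq_zero hdet
  by_cases hus : u = 0 ∨ s = 0
  · exact ⟨0, by simpa using hus⟩
  obtain ⟨hu, hs⟩ := not_or.mp hus
  rw [transpose_vecMulVec, vecMulVec_mul_mul_vecMulVec, smul_eq_zero] at hJ hT
  replace hJ := hJ.resolve_right (vecMulVec_ne_zero hu hw)
  replace hT := hT.resolve_right (vecMulVec_ne_zero hr hs)
  simp only [dotProduct, vecMul, MJ, MT, of_apply, cons_val', cons_val_fin_one, Fin.sum_univ_two,
    cons_val_zero, cons_val_one, mul_zero, mul_one, zero_add, add_zero, mul_neg, neg_mul] at hJ hT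
  obtain ⟨α, rfl⟩ := exists_eq_smul_of_mul_eq_mul (negSnd_ne_zero hw) (v := u) (by
    simp [negSnd]; linear_combination -hT)
  obtain ⟨β, rfl⟩ := exists_eq_smul_of_mul_eq_mul hr (v := s) (by linear_combination -hJ)
  exact ⟨α * β, by rw [smul_vecMulVec, vecMulVec_smul, smul_smul, mul_comm]⟩

lemma Z_subset_range_zParam_union_range_swap :
    Z ⊆ Set.range zParam ∪ Set.range (Prod.swap ∘ zParam) := by
  rintro ⟨B₁, B₂⟩ hp
  by_cases hB₂ : B₂ = 0
  · obtain ⟨u, r, rfl⟩ := exists_eq_vecMulVec_of_det_eq_zero hp.1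
    exact Or.inr ⟨(0, u, r), by simp [zParam, hB₂]⟩
  · obtain ⟨w, r, rfl⟩ := exists_eq_vecMulVec_of_det_eq_zero hp.2.1
    obtain ⟨hw, hr⟩ : w ≠ 0 ∧ r ≠ 0 := by simpa [not_or] using hB₂
    obtain ⟨t, rfl⟩ := exists_eq_smul_vecMulVec_negSnd_of_mem_Z hw hr hp
    exact Or.inl ⟨(t, w, r), rfl⟩

lemma dense_setOf_ne_zero :
    Dense {q : ℂ × (Fin 2 → ℂ) × (Fin 2 → ℂ) | q.1 ≠ 0 ∧ q.2.1 ≠ 0 ∧ q.2.2 ≠ 0} :=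
  (dense_compl_singleton 0).prod ((dense_compl_singleton 0).prod (dense_compl_singleton 0))

theorem stmt5 (ε : ℂ) (hε : ε ≠ 0) :
    closure {w : Matrix (Fin 2) (Fin 2) ℂ × Matrix (Fin 2) (Fin 2) ℂ |
      ∃ h : H, act h (veps ε) = w} = Z := by
  set S := {q : ℂ × (Fin 2 → ℂ) × (Fin 2 → ℂ) | q.1 ≠ 0 ∧ q.2.1 ≠ 0 ∧ q.2.2 ≠ 0}
  have hS : zParam '' S ⊆ {w | ∃ h : H, act h (veps ε) = w} := by
    rintro _ ⟨⟨t, w, r⟩, ⟨ht, hw, hr⟩, rfl⟩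
    exact zParam_mem_orbit hε ht hw hr
  have hS' : (Prod.swap ∘ zParam) '' S ⊆ {w | ∃ h : H, act h (veps ε) = w} := by
    rintro _ ⟨⟨s, u, r⟩, ⟨hs, hu, hr⟩, rfl⟩
    rw [Function.comp_apply, swap_zParam hs]
    exact zParam_mem_orbit hε (inv_ne_zero hs) (smul_ne_zero hs (negSnd_ne_zero hu)) hr
  refine (closure_minimal ?_ isClosed_Z).antisymm fun p hp => ?_
  · rintro _ ⟨h, rfl⟩
    rw [act_veps]
    exact zParam_mem_Z _
  · rcases Z_subset_range_zParam_union_range_swap hp with hp | hp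
    · exact closure_mono hS (continuous_zParam.range_subset_closure_image_dense
        dense_setOf_ne_zero hp)
    · exact closure_mono hS' <| (continuous_swap.comp continuous_zParam)
        |>.range_subset_closure_image_dense dense_setOf_ne_zero hp
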